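/- In the dihedral group D₃₀ of order 30, the dihedral subgroup of order 6 (isomorphic to S₃) is a Schmidt group that is modular in D₃₀ but not subnormal in D₃₀. -/

import Mathlib

/-- A subgroup `M` is modular in `G` if it is a modular element of the subgroup lattice. -/
def IsModularSubgroup {G : Type*} [Group G] (M : Subgroup G) : Prop :=
  (∀ X Z : Subgroup G, X ≤ Z → (X ⊔ M) ⊓ Z = X ⊔ (M ⊓ Z)) ∧
  (∀ Y Z : Subgroup G, M ≤ Z → (M ⊔ Y) ⊓ Z = M ⊔ (Y ⊓ Z))

/-- A subgroup `H` is subnormal in `G` if there is a chain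
`H = H₀ ⊴ H₁ ⊴ … ⊴ Hₙ = G` with each term normal in the next. -/
def IsSubnormal {G : Type*} [Group G] (H : Subgroup G) : Prop :=
  ∃ (n : ℕ) (c : ℕ → Subgroup G), c 0 = H ∧ c n = ⊤ ∧
    ∀ i < n, c i ≤ c (i + 1) ∧ ((c i).subgroupOf (c (i + 1))).Normal

/-- A Schmidt group is a finite non-nilpotent group all of whose proper
subgroups are nilpotent. -/
def IsSchmidtGroup (S : Type*) [Group S] : Prop :=
  Finite S ∧ ¬ Group.IsNilpotent S ∧ ∀ H : Subgroup S, H ≠ ⊤ → Group.IsNilpotent ↥H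

/-- The Fitting subgroup: the join of all nilpotent normal subgroups. -/
def FittingSubgroup (G : Type*) [Group G] : Subgroup G :=
  ⨆ H : {H : Subgroup G // H.Normal ∧ Group.IsNilpotent ↥H}, (H : Subgroup G)

instance FittingSubgroup.normal {G : Type*} [Group G] : (FittingSubgroup G).Normal := by
  constructor
  intro n hn g
  refine Subgroup.iSup_induction (G := G)
    (fun H : {H : Subgroup G // H.Normal ∧ Group.IsNilpotent ↥H} => (H : Subgroup G))
    (C := fun x => g * x * g⁻¹ ∈ FittingSubgroup G) hn ?_ ?_ ?_
  · intro H x hx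
    exact Subgroup.mem_iSup_of_mem H (H.2.1.conj_mem x hx g)
  · simpa using (FittingSubgroup G).one_mem
  · intro x y hx hy
    have : (g * x * g⁻¹) * (g * y * g⁻¹) = g * (x * y) * g⁻¹ := by group
    exact this ▸ (FittingSubgroup G).mul_mem hx hy

/-! The subgroup `M = ⟨r⁵, s⟩` of `D₁₅` consists of the rotations and reflections whose index is a
multiple of `5`. It acts faithfully on `ZMod 3`, so `M ≅ S₃`, a group of order `2 · 3` with trivial
centre, hence a Schmidt group. Its index `5` is prime, so `M` is maximal; as it is not normal, no
chain of normal steps can leave it, and it is not subnormal.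

For modularity, maximality makes the second law trivial, and the first reduces to
`W ≤ ⟨x⟩ ⊔ (M ⊓ W)` for every subgroup `W` and every `x ∈ W \ M`. Since `D₁₅ = ⟨r³⟩ M`, it is
enough that `r³ ∈ ⟨x⟩ ⊔ (M ⊓ W)`. For a rotation `x ∉ M` this holds because `r³` is a power of `x`;
for a reflection `x`, some reflection `y ∈ M ⊓ W` makes `x y` a rotation outside `M`, whose powers
contain `r³`. -/

section ModularSubgroup

open Subgroup

variable {G : Type*} [Group G] {M : Subgroup G}

theorem isCoatom_of_index_prime (hM : M.index.Prime) : IsCoatom M := by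
  refine ⟨fun h => hM.ne_one (index_eq_one.mpr h), fun K hMK => ?_⟩
  rcases (Nat.dvd_prime hM).mp (index_dvd_of_le hMK.le) with hK | hK
  · exact index_eq_one.mp hK
  · have hrel : M.relIndex K = 1 := by
      have := relIndex_mul_index hMK.le
      rw [hK] at this
      exact (Nat.mul_eq_right hM.ne_zero).mp this
    exact absurd (relIndex_eq_one.mp hrel) hMK.not_ge

theorem mem_sup_inf_of_inv_mul_mem {H W : Subgroup G} {n z : G} (hHW : H ≤ W)
    (hn : n ∈ H ⊔ (M ⊓ W)) (hz : z ∈ W) (hnz : n⁻¹ * z ∈ M) : z ∈ H ⊔ (M ⊓ W) := by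
  have hnW : n ∈ W := sup_le hHW inf_le_right hn
  have hm : n⁻¹ * z ∈ H ⊔ (M ⊓ W) :=
    mem_sup_right (mem_inf.mpr ⟨hnz, W.mul_mem (W.inv_mem hnW) hz⟩)
  simpa using (H ⊔ (M ⊓ W)).mul_mem hn hm

theorem isModularSubgroup_of_isCoatom (hM : IsCoatom M)
    (hgen : ∀ x ∉ M, ∀ W : Subgroup G, x ∈ W → W ≤ zpowers x ⊔ (M ⊓ W)) :
    IsModularSubgroup M := by
  refine ⟨fun X Z hXZ => le_antisymm ?_ (le_inf (sup_le_sup_left inf_le_left _)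
    (sup_le hXZ inf_le_right)), fun Y Z hMZ => ?_⟩
  · by_cases hXM : X ≤ M
    · rw [sup_eq_right.mpr hXM, sup_eq_right.mpr (le_inf hXM hXZ)]
    · obtain ⟨x, hxX, hxM⟩ := SetLike.not_le_iff_exists.mp hXM
      exact inf_le_right.trans ((hgen x hxM Z (hXZ hxX)).trans
        (sup_le_sup_right (zpowers_le.mpr hxX) _))
  · rcases hM.le_iff.mp hMZ with rfl | rfl
    · simp
    · rw [inf_eq_right.mpr le_sup_left, sup_eq_left.mpr inf_le_right]

end ModularSubgroup

theorem not_isSubnormal_of_isCoatom {G : Type*} [Group G] {M : Subgroup G} (hM : IsCoatom M)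
    (hnormal : ¬ M.Normal) : ¬ IsSubnormal M := by
  rintro ⟨n, c, hc0, hcn, hstep⟩
  have hc : ∀ i ≤ n, c i = M := by
    intro i hi
    induction i with
    | zero => exact hc0
    | succ i ih =>
      obtain ⟨hle, hcnormal⟩ := hstep i hi
      rw [ih (by omega)] at hle hcnormal
      refine (hM.le_iff.mp hle).resolve_left fun htop => hnormal ?_
      rwa [htop, Subgroup.normal_subgroupOf_iff_le_normalizer le_top, top_le_iff,
        Subgroup.normalizer_eq_top_iff] at hcnormal
  exact hM.1 (hc n le_rfl ▸ hcn)

theorem isSchmidtGroup_of_card_eq_prime_mul_prime {S : Type*} [Group S] [Finite S] {p q : ℕ}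
    (hp : p.Prime) (hq : q.Prime) (hcard : Nat.card S = p * q) (hS : ¬ Group.IsNilpotent S) :
    IsSchmidtGroup S := by
  refine ⟨inferInstance, hS, fun H hH => ?_⟩
  obtain ⟨a, b, ha, hb, hab⟩ := Nat.dvd_mul.mp (hcard ▸ H.card_subgroup_dvd_card)
  have hp' : Fact p.Prime := ⟨hp⟩
  have hq' : Fact q.Prime := ⟨hq⟩
  rcases (Nat.dvd_prime hq).mp hb with rfl | rfl
  · exact (IsPGroup.of_card_dvd_pow (n := 1) (by simpa [← hab] using ha)).isNilpotent
  · rcases (Nat.dvd_prime hp).mp ha with rfl | rfl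
    · exact (IsPGroup.of_card_dvd_pow (n := 1) (by rw [← hab, one_mul, pow_one])).isNilpotent
    · exact absurd ((H.card_eq_iff_eq_top).mp (by rw [hcard, hab])) hH

theorem Equiv.Perm.not_isNilpotent_fin_three : ¬ Group.IsNilpotent (Equiv.Perm (Fin 3)) := by
  intro h
  refine Group.IsNilpotent.center_ne_bot (Equiv.Perm (Fin 3)) (Subgroup.eq_bot_iff_forall _ |>.mpr ?_)
  intro g hg
  rw [Subgroup.mem_center_iff] at hg
  revert g
  decide

namespace DihedralGroup

variable {n : ℕ}

def annihSubgroup (k : ZMod n) : Subgroup (DihedralGroup n) where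
  carrier := {g | match g with | r i => k * i = 0 | sr i => k * i = 0}
  one_mem' := mul_zero k
  mul_mem' := by
    rintro (i | i) (j | j) hi hj <;>
      simp only [Set.mem_ofPred_eq, r_mul_r, r_mul_sr, sr_mul_r, sr_mul_sr] at hi hj ⊢ <;>
      first | linear_combination hi + hj | linear_combination hj - hi
  inv_mem' := by
    rintro (i | i) hi <;> simp only [Set.mem_ofPred_eq, inv_r, inv_sr] at hi ⊢
    · linear_combination -hi
    · exact hi

variable {k i : ZMod n}

@[simp]
theorem r_mem_annihSubgroup : r i ∈ annihSubgroup k ↔ k * i = 0 := Iff.rfl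

@[simp]
theorem sr_mem_annihSubgroup : sr i ∈ annihSubgroup k ↔ k * i = 0 := Iff.rfl

instance : DecidablePred (· ∈ annihSubgroup k)
  | r _ => decidable_of_iff _ r_mem_annihSubgroup.symm
  | sr _ => decidable_of_iff _ sr_mem_annihSubgroup.symm

def toPermZMod {m : ℕ} (h : m ∣ n) : DihedralGroup n →* Equiv.Perm (ZMod m) where
  toFun
    | r i => Equiv.addLeft (ZMod.castHom h (ZMod m) i)
    | sr i => Equiv.subLeft (-ZMod.castHom h (ZMod m) i)
  map_one' := by rw [one_def]; ext x; simp
  map_mul' := by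
    rintro (i | i) (j | j) <;> ext x <;>
      simp only [r_mul_r, r_mul_sr, sr_mul_r, sr_mul_sr, map_add, map_sub, Equiv.Perm.coe_mul,
        Function.comp_apply, Equiv.coe_addLeft, Equiv.subLeft_apply] <;> ring

end DihedralGroup

open DihedralGroup

local notation "D₁₅" => DihedralGroup 15

theorem closure_r_five_sr_zero :
    Subgroup.closure {r 5, sr 0} = annihSubgroup (3 : ZMod 15) := by
  refine le_antisymm ((Subgroup.closure_le _).mpr ?_) fun g hg => ?_
  · rintro g (rfl | rfl) <;> simp only [SetLike.mem_coe] <;> decide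
  · have hr5 : (r 5 : D₁₅) ∈ Subgroup.closure {r 5, sr 0} := Subgroup.subset_closure (by simp)
    have hsr0 : (sr 0 : D₁₅) ∈ Subgroup.closure {r 5, sr 0} := Subgroup.subset_closure (by simp)
    have hrot : ∀ i : ZMod 15, 3 * i = 0 → (r i : D₁₅) ∈ Subgroup.closure {r 5, sr 0} := by
      intro i hi
      obtain ⟨a, rfl⟩ : ∃ a : Fin 3, i = 5 * (a : ℕ) := by revert i; decide
      rw [← r_pow]
      exact pow_mem hr5 _
    rcases g with i | i
    · exact hrot i hg
    · simpa using mul_mem hsr0 (hrot i hg)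

theorem card_annihSubgroup_three : Nat.card (annihSubgroup (3 : ZMod 15)) = 6 := by
  rw [Nat.card_eq_fintype_card]
  decide

theorem isCoatom_annihSubgroup_three : IsCoatom (annihSubgroup (3 : ZMod 15)) := by
  refine isCoatom_of_index_prime ?_
  have h := (annihSubgroup (3 : ZMod 15)).index_mul_card
  rw [card_annihSubgroup_three, nat_card] at h
  rw [show (annihSubgroup (3 : ZMod 15)).index = 5 by omega]
  norm_num

theorem not_normal_annihSubgroup_three : ¬ (annihSubgroup (3 : ZMod 15)).Normal := fun h =>
  absurd (h.conj_mem (sr 0) (by decide) (r 1)) (by decide)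

section Modular

open Subgroup

local notation "M" => annihSubgroup (3 : ZMod 15)

theorem r_three_mem_zpowers_r {t : ZMod 15} (ht : 3 * t ≠ 0) : (r 3 : D₁₅) ∈ zpowers (r t) := by
  obtain ⟨a, ha⟩ := (by decide : ∀ t : ZMod 15, 3 * t ≠ 0 → ∃ a : ZMod 15, t * a = 3) t ht
  refine mem_zpowers_iff.mpr ⟨a.val, ?_⟩
  rw [zpow_natCast, r_pow, ZMod.natCast_zmod_val, ha]

theorem exists_mem_zpowers_r_three_inv_mul_mem (g : D₁₅) :
    ∃ c ∈ zpowers (r 3 : D₁₅), c⁻¹ * g ∈ M := by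
  obtain ⟨a, ha⟩ : ∃ a : Fin 5, (r 3 ^ (a : ℕ))⁻¹ * g ∈ M := by revert g; decide
  exact ⟨_, pow_mem (mem_zpowers _) _, ha⟩

variable {W : Subgroup D₁₅} {x : D₁₅}

theorem mem_zpowers_sup_inf_of_r_three_mem (hxW : x ∈ W) (h3 : r 3 ∈ zpowers x ⊔ (M ⊓ W))
    {z : D₁₅} (hz : z ∈ W) : z ∈ zpowers x ⊔ (M ⊓ W) := by
  obtain ⟨c, hc, hcz⟩ := exists_mem_zpowers_r_three_inv_mul_mem z
  exact mem_sup_inf_of_inv_mul_mem (zpowers_le.mpr hxW) (zpowers_le.mpr h3 hc) hz hcz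

theorem r_mem_zpowers_sr_sup_inf {i t : ZMod 15} (hi : sr i ∉ M) (hiW : sr i ∈ W)
    (htW : r t ∈ W) : r t ∈ zpowers (sr i) ⊔ (M ⊓ W) := by
  by_cases ht : 3 * t = 0
  · exact mem_sup_right (mem_inf.mpr ⟨ht, htW⟩)
  rw [sr_mem_annihSubgroup] at hi
  obtain ⟨k, hk⟩ := (by decide : ∀ i t : ZMod 15, 3 * i ≠ 0 → 3 * t ≠ 0 →
    ∃ k : ZMod 15, 3 * (i + t * k) = 0) i t hi ht
  have hkW : sr (i + t * k) ∈ M ⊓ W := by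
    refine mem_inf.mpr ⟨hk, ?_⟩
    rw [← ZMod.natCast_zmod_val k, ← sr_mul_r, ← r_pow]
    exact mul_mem hiW (pow_mem htW _)
  have hktT : r (t * k) ∈ zpowers (sr i) ⊔ (M ⊓ W) := by
    rw [show r (t * k) = sr i * sr (i + t * k) by rw [sr_mul_sr, add_sub_cancel_left]]
    exact mul_mem (mem_sup_left (mem_zpowers _)) (mem_sup_right hkW)
  refine mem_zpowers_sup_inf_of_r_three_mem hiW ?_ htW
  refine zpowers_le.mpr hktT (r_three_mem_zpowers_r fun h => hi ?_)
  linear_combination hk - h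

theorem le_zpowers_sup_inf_of_notMem (hx : x ∉ M) (hxW : x ∈ W) : W ≤ zpowers x ⊔ (M ⊓ W) := by
  intro z hz
  rcases x with i | i
  · exact mem_zpowers_sup_inf_of_r_three_mem hxW (mem_sup_left (r_three_mem_zpowers_r hx)) hz
  rcases z with t | j
  · exact r_mem_zpowers_sr_sup_inf hx hxW hz
  · have hji : r (j - i) ∈ zpowers (sr i) ⊔ (M ⊓ W) :=
      r_mem_zpowers_sr_sup_inf hx hxW (sr_mul_sr i j ▸ mul_mem hxW hz)
    simpa using mul_mem (mem_sup_left (mem_zpowers (sr i))) hji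

theorem isModularSubgroup_annihSubgroup_three : IsModularSubgroup M :=
  isModularSubgroup_of_isCoatom isCoatom_annihSubgroup_three fun _ hx _ hxW =>
    le_zpowers_sup_inf_of_notMem hx hxW

end Modular

theorem injective_toPermZMod_three_comp_subtype :
    Function.Injective ((toPermZMod (by norm_num : 3 ∣ 15)).comp
      (annihSubgroup (3 : ZMod 15)).subtype) := by
  rw [injective_iff_map_eq_one]
  rintro ⟨g, hg⟩ h
  simp only [MonoidHom.comp_apply, Subgroup.coe_subtype] at h
  ext
  revert g
  decide

noncomputable def annihSubgroupThreeEquivPerm :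
    annihSubgroup (3 : ZMod 15) ≃* Equiv.Perm (Fin 3) :=
  MulEquiv.ofBijective _ <| injective_toPermZMod_three_comp_subtype.bijective_of_nat_card_le <| by
    rw [card_annihSubgroup_three, Nat.card_perm, Nat.card_zmod]
    decide

theorem isSchmidtGroup_annihSubgroup_three : IsSchmidtGroup (annihSubgroup (3 : ZMod 15)) :=
  isSchmidtGroup_of_card_eq_prime_mul_prime Nat.prime_two Nat.prime_three card_annihSubgroup_three
    ((Group.isNilpotent_congr annihSubgroupThreeEquivPerm).not.mpr
      Equiv.Perm.not_isNilpotent_fin_three)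

/-- In the dihedral group `D₃₀` of order `30`, the dihedral subgroup of order `6`
(generated by the rotation `r^5` of order `3` and a reflection, and isomorphic to `S₃`)
is a Schmidt group that is modular but not subnormal in `D₃₀`. -/
theorem dihedral30_schmidt_subgroup_modular_not_subnormal :
    Nat.card ↥(Subgroup.closure {DihedralGroup.r 5, DihedralGroup.sr 0} :
      Subgroup (DihedralGroup 15)) = 6 ∧
    Nonempty (↥(Subgroup.closure {DihedralGroup.r 5, DihedralGroup.sr 0} :
      Subgroup (DihedralGroup 15)) ≃* Equiv.Perm (Fin 3)) ∧
    IsSchmidtGroup ↥(Subgroup.closure {DihedralGroup.r 5, DihedralGroup.sr 0} :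
      Subgroup (DihedralGroup 15)) ∧
    IsModularSubgroup (Subgroup.closure {DihedralGroup.r 5, DihedralGroup.sr 0} :
      Subgroup (DihedralGroup 15)) ∧
    ¬ IsSubnormal (Subgroup.closure {DihedralGroup.r 5, DihedralGroup.sr 0} :
      Subgroup (DihedralGroup 15)) := by
  rw [closure_r_five_sr_zero]
  exact ⟨card_annihSubgroup_three, ⟨annihSubgroupThreeEquivPerm⟩,
    isSchmidtGroup_annihSubgroup_three, isModularSubgroup_annihSubgroup_three,
    not_isSubnormal_of_isCoatom isCoatom_annihSubgroup_three not_normal_annihSubgroup_three⟩
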